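/- Let [n] denote the ordered set {0 ≤ 1 ≤ ⋯ ≤ n} and Ar[n] the category with objects pairs (i,j) with 0 ≤ i ≤ j ≤ n and a unique morphism (i,j) → (i',j') whenever i ≤ i' and j ≤ j'. Then in an abelian category A, the category of functors F : Ar[n] → A satisfying (a) F(i,i) = 0 for all i, (b) each map F(i,j) → F(i,k) is a monomorphism for i ≤ j ≤ k, and (c) each square with corners F(i,j), F(i,k), F(j,j), F(j,k) is a pushout, is equivalent to the category of sequences of monomorphisms 0 → A₁ → A₂ → ⋯ → A_n in A. -/

import Mathlib

open CategoryTheory CategoryTheory.Limits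

universe v u

variable (n : ℕ)

/-- The category `Ar[n]`: objects are pairs `(i,j)` with `0 ≤ i ≤ j ≤ n`, with a
unique morphism `(i,j) → (i',j')` whenever `i ≤ i'` and `j ≤ j'`. -/
def ArCat := {p : Fin (n + 1) × Fin (n + 1) // p.1 ≤ p.2}

instance : Preorder (ArCat n) :=
  Subtype.preorder _

variable {A : Type u} [Category.{v} A] [Abelian A]

/-- An object of `Ar[n]` from the data `i ≤ j`. -/
def arObj (i j : Fin (n + 1)) (h : i ≤ j) : ArCat n := ⟨(i, j), h⟩

/-- The Waldhausen-type conditions on a functor `F : Ar[n] → A`: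
(a) `F(i,i) = 0`; (b) `F(i,j) → F(i,k)` is a monomorphism for `i ≤ j ≤ k`;
(c) the squares `F(i,j) → F(i,k), F(i,j) → F(j,j), F(j,j) → F(j,k), F(i,k) → F(j,k)`
are pushouts. -/
def IsSObj (F : ArCat n ⥤ A) : Prop :=
  (∀ i : Fin (n + 1), IsZero (F.obj (arObj n i i le_rfl))) ∧
  (∀ (i j k : Fin (n + 1)) (hij : i ≤ j) (hjk : j ≤ k),
    Mono (F.map (homOfLE (show arObj n i j hij ≤ arObj n i k (hij.trans hjk) from
      ⟨le_rfl, hjk⟩)))) ∧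
  (∀ (i j k : Fin (n + 1)) (hij : i ≤ j) (hjk : j ≤ k),
    IsPushout
      (F.map (homOfLE (show arObj n i j hij ≤ arObj n i k (hij.trans hjk) from
        ⟨le_rfl, hjk⟩)))
      (F.map (homOfLE (show arObj n i j hij ≤ arObj n j j le_rfl from ⟨hij, le_rfl⟩)))
      (F.map (homOfLE (show arObj n i k (hij.trans hjk) ≤ arObj n j k hjk from
        ⟨hij, le_rfl⟩)))
      (F.map (homOfLE (show arObj n j j le_rfl ≤ arObj n j k hjk from ⟨le_rfl, hjk⟩))))

/-- The conditions on a functor `G : [n] → A` expressing that it is a sequence of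
monomorphisms `0 → A₁ → ⋯ → A_n`. -/
def IsMonoSeq (G : Fin (n + 1) ⥤ A) : Prop :=
  IsZero (G.obj 0) ∧ ∀ (i j : Fin (n + 1)) (h : i ≤ j), Mono (G.map (homOfLE h))

/-! ### Auxiliary lemmas -/

section PreorderHelpers

variable {C : Type*} [Preorder C] {D : Type*} [Category D]

lemma pmap_eq (F : C ⥤ D) {x y : C} (f g : x ⟶ y) : F.map f = F.map g := by
  congr 1
  apply Subsingleton.elim

lemma pmap_comp (F : C ⥤ D) {x y z : C} (f : x ⟶ y) (g : y ⟶ z) (h : x ⟶ z) :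
    F.map f ≫ F.map g = F.map h := by
  rw [← F.map_comp]
  exact pmap_eq F _ _

lemma pmap_self (F : C ⥤ D) {x : C} (f : x ⟶ x) : F.map f = 𝟙 _ := by
  rw [Subsingleton.elim f (𝟙 x), F.map_id]

end PreorderHelpers

section ZeroPushout

variable {W X Y Z : A}

/-- If a pushout square has a zero corner, the right map is a cokernel of the top map. -/
noncomputable def cokerOfPushout {f : X ⟶ Y} {g : X ⟶ W} {inl : Y ⟶ Z} {inr : W ⟶ Z}
    (hW : IsZero W) (h : IsPushout f g inl inr) (w : f ≫ inl = 0) :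
    IsColimit (CokernelCofork.ofπ inl w) :=
  CokernelCofork.IsColimit.ofπ _ _
    (fun {T} k hk => h.desc k 0 (by rw [hk, hW.eq_of_tgt g 0, zero_comp]))
    (fun {T} k hk => h.inl_desc _ _ _)
    (fun {T} k hk m hm => by
      apply h.hom_ext
      · rw [hm, h.inl_desc]
      · apply hW.eq_of_src)

/-- Conversely, a cokernel diagram with a zero corner is a pushout square. -/
lemma pushoutOfCoker {f : X ⟶ Y} {inl : Y ⟶ Z} (w : f ≫ inl = 0)
    (hc : IsColimit (CokernelCofork.ofπ inl w)) (hW : IsZero W) (g : X ⟶ W) (inr : W ⟶ Z) :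
    IsPushout f g inl inr := by
  have hg : g = 0 := hW.eq_of_tgt g 0
  subst hg
  have hsq : f ≫ inl = (0 : X ⟶ W) ≫ inr := by rw [w, zero_comp]
  refine ⟨⟨hsq⟩, ⟨PushoutCocone.IsColimit.mk hsq
    (fun s => hc.desc (CokernelCofork.ofπ s.inl (by rw [s.condition, zero_comp])))
    (fun s => hc.fac (CokernelCofork.ofπ s.inl (by rw [s.condition, zero_comp])) WalkingParallelPair.one)
    (fun s => hW.eq_of_src _ _)
    (fun s m h1 h2 => ?_)⟩⟩
  apply Cofork.IsColimit.hom_ext hc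
  have hfac := hc.fac (CokernelCofork.ofπ s.inl (by rw [s.condition, zero_comp]))
    WalkingParallelPair.one
  simp only [Cofork.ofπ_ι_app, Cofork.π_ofπ] at hfac ⊢
  dsimp
  rw [h1]
  exact hfac.symm

end ZeroPushout

section MonoDesc

open CategoryTheory.Abelian

lemma mono_cokernel_desc {X Y Z : A} (f : X ⟶ Y) (f' : X ⟶ Z) (g : Y ⟶ Z) [Mono g]
    (hfg : f ≫ g = f') (w : f ≫ (g ≫ cokernel.π f') = 0) :
    Mono (cokernel.desc f (g ≫ cokernel.π f') w) := by
  apply Pseudoelement.mono_of_zero_of_map_zero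
  intro a ha
  obtain ⟨y, rfl⟩ := Pseudoelement.pseudo_surjective_of_epi (cokernel.π f) a
  have ha' : (Pseudoelement.pseudoApply (cokernel.π f')) (Pseudoelement.pseudoApply g y) = 0 := by
    rw [← Pseudoelement.comp_apply, ← cokernel.π_desc f (g ≫ cokernel.π f') w,
      Pseudoelement.comp_apply]
    exact ha
  have hS : (ShortComplex.mk f' (cokernel.π f') (cokernel.condition f')).Exact :=
    ShortComplex.exact_of_g_is_cokernel _ (cokernelIsCokernel f')
  obtain ⟨x, hx⟩ := Pseudoelement.pseudo_exact_of_exact hS _ ha'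
  have hxy : Pseudoelement.pseudoApply f x = y := by
    apply Pseudoelement.pseudo_injective_of_mono g
    rw [← Pseudoelement.comp_apply, hfg]
    exact hx
  rw [← hxy, ← Pseudoelement.comp_apply, cokernel.condition, Pseudoelement.zero_apply]

end MonoDesc

section CokerColimit

/-- The induced map `coker(X → Z) → coker(Y → Z)` is a cokernel of the induced map
`coker(X → Y) → coker(X → Z)`. -/
noncomputable def cokerDescIsColimit {X Y Z : A} (u : X ⟶ Y) (uv : X ⟶ Z) (v : Y ⟶ Z)
    (w1 : u ≫ (v ≫ cokernel.π uv) = 0) (e : Z ⟶ Z) (he : e = 𝟙 Z)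
    (w2 : uv ≫ (e ≫ cokernel.π v) = 0)
    (w3 : cokernel.desc u (v ≫ cokernel.π uv) w1 ≫ cokernel.desc uv (e ≫ cokernel.π v) w2 = 0) :
    IsColimit (CokernelCofork.ofπ (cokernel.desc uv (e ≫ cokernel.π v) w2) w3) := by
  subst he
  refine CokernelCofork.IsColimit.ofπ _ _
    (fun {T} k hk => cokernel.desc v (cokernel.π uv ≫ k) ?_)
    (fun {T} k hk => ?_) (fun {T} k hk m hm => ?_)
  · rw [← Category.assoc, ← cokernel.π_desc u (v ≫ cokernel.π uv) w1, Category.assoc, hk,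
      comp_zero]
  · rw [← cancel_epi (cokernel.π uv), ← Category.assoc, cokernel.π_desc, Category.assoc,
      Category.id_comp, cokernel.π_desc]
  · apply coequalizer.hom_ext
    have : cokernel.π uv ≫ cokernel.desc uv (𝟙 Z ≫ cokernel.π v) w2 = cokernel.π v := by
      rw [cokernel.π_desc, Category.id_comp]
    calc cokernel.π v ≫ m = cokernel.π uv ≫ k := by rw [← this, Category.assoc, hm]
    _ = cokernel.π v ≫ cokernel.desc v (cokernel.π uv ≫ k) _ := by rw [cokernel.π_desc]

end CokerColimit

section CokF

/-- The functor `Ar[n] → A` built from a sequence `G` by `F(i,j) = coker(G i → G j)`. -/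
noncomputable def cokF (G : Fin (n + 1) ⥤ A) : ArCat n ⥤ A where
  obj p := cokernel (G.map (homOfLE p.2))
  map {p q} f := cokernel.desc _
    (G.map (homOfLE (leOfHom f).2) ≫ cokernel.π (G.map (homOfLE q.2)))
    (by
      rw [← Category.assoc, pmap_comp G _ _ (homOfLE ((leOfHom f).1.trans q.2)),
        ← pmap_comp G (homOfLE (leOfHom f).1) (homOfLE q.2), Category.assoc,
        cokernel.condition, comp_zero])
  map_id p := by
    apply coequalizer.hom_ext
    simp [pmap_self]
  map_comp {p q r} f g := by
    apply coequalizer.hom_ext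
    simp only [cokernel.π_desc, cokernel.π_desc_assoc, Category.comp_id, Category.assoc]
    rw [← Category.assoc, pmap_comp G _ _ (homOfLE (leOfHom (f ≫ g)).2)]

lemma isSObj_cokF (G : Fin (n + 1) ⥤ A) (hG : IsMonoSeq n G) : IsSObj n (cokF n G) := by
  have hzero : ∀ i : Fin (n + 1), IsZero ((cokF n G).obj (arObj n i i le_rfl)) := by
    intro i
    show IsZero (cokernel (G.map (homOfLE le_rfl)))
    rw [pmap_self G (homOfLE le_rfl)]
    exact (isZero_zero A).of_iso (cokernel.ofEpi (𝟙 _))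
  refine ⟨hzero, fun i j k hij hjk => ?_, fun i j k hij hjk => ?_⟩
  · haveI : Mono (G.map (homOfLE hjk)) := hG.2 j k hjk
    exact mono_cokernel_desc (G.map (homOfLE hij)) (G.map (homOfLE (hij.trans hjk)))
      (G.map (homOfLE hjk)) (pmap_comp G _ _ _) _
  · refine pushoutOfCoker ?_ (cokerDescIsColimit (G.map (homOfLE hij))
      (G.map (homOfLE (hij.trans hjk))) (G.map (homOfLE hjk)) ?_
      (G.map (homOfLE le_rfl)) (pmap_self G _) ?_ ?_) (hzero j) _ _
    all_goals
      apply coequalizer.hom_ext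
      simp only [cokernel.π_desc, cokernel.π_desc_assoc, comp_zero, Category.assoc,
        cokernel.condition, zero_comp]
    all_goals simp only [pmap_self G _, Category.id_comp, cokernel.condition]
    all_goals erw [cokernel.π_desc_assoc, Category.assoc, cokernel.π_desc, cokernel.condition]

end CokF

section Restriction

/-- The functor `[n] → Ar[n]`, `i ↦ (0,i)`. -/
def toAr : Fin (n + 1) ⥤ ArCat n :=
  Monotone.functor (f := fun i => arObj n 0 i (Fin.zero_le i)) (fun {_ _} h => ⟨le_rfl, h⟩)

variable {F F' : ArCat n ⥤ A}

/-- The canonical morphism `(0, j) ⟶ (i, j)` in `Ar[n]`. -/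
def eHom (p : ArCat n) : (toAr n).obj p.1.2 ⟶ p := homOfLE ⟨Fin.zero_le _, le_rfl⟩

lemma zero_after (hF : IsSObj n F) {i j : Fin (n + 1)} (hij : i ≤ j) :
    F.map (homOfLE (show arObj n 0 i (Fin.zero_le i) ≤ arObj n i j hij from
      ⟨Fin.zero_le i, hij⟩)) = 0 := by
  rw [← pmap_comp F (homOfLE (show arObj n 0 i (Fin.zero_le i) ≤ arObj n i i le_rfl from
      ⟨Fin.zero_le i, le_rfl⟩)) (homOfLE (show arObj n i i le_rfl ≤ arObj n i j hij from
      ⟨le_rfl, hij⟩)),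
    (hF.1 i).eq_of_src (F.map _) 0, comp_zero]

lemma wcomp (hF : IsSObj n F) (p : ArCat n) :
    F.map (homOfLE (show (toAr n).obj p.1.1 ≤ (toAr n).obj p.1.2 from ⟨le_rfl, p.2⟩)) ≫
      F.map (eHom n p) = 0 := by
  erw [pmap_comp F _ _ (homOfLE (show arObj n 0 p.1.1 (Fin.zero_le _) ≤
      arObj n p.1.1 p.1.2 p.2 from ⟨Fin.zero_le _, p.2⟩))]
  exact zero_after n hF p.2

/-- For an S-object, `F(0,j) → F(i,j)` is a cokernel of `F(0,i) → F(0,j)`. -/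
noncomputable def eCoker (hF : IsSObj n F) (p : ArCat n) :
    IsColimit (CokernelCofork.ofπ (F.map (eHom n p)) (wcomp n hF p)) :=
  cokerOfPushout (hF.1 p.1.1) (hF.2.2 0 p.1.1 p.1.2 (Fin.zero_le _) p.2) _

lemma epi_e (hF : IsSObj n F) (p : ArCat n) : Epi (F.map (eHom n p)) := by
  have := epi_of_isColimit_cofork (eCoker n hF p)
  simpa using this

/-- Extension of a natural transformation on `[n]` to one on `Ar[n]`. -/
noncomputable def extApp (hF : IsSObj n F) (hF' : IsSObj n F')
    (μ : toAr n ⋙ F ⟶ toAr n ⋙ F') (p : ArCat n) : F.obj p ⟶ F'.obj p :=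
  (hF.2.2 0 p.1.1 p.1.2 (Fin.zero_le _) p.2).desc (μ.app p.1.2 ≫ F'.map (eHom n p)) 0 (by
    erw [comp_zero, ← Category.assoc,
      show F.map (homOfLE _) = (toAr n ⋙ F).map (homOfLE p.2) from pmap_eq F _ _,
      μ.naturality (homOfLE p.2), Category.assoc]
    show μ.app p.1.1 ≫ F'.map ((toAr n).map (homOfLE p.2)) ≫ F'.map (eHom n p) = 0
    erw [pmap_comp F' _ _ (homOfLE (show arObj n 0 p.1.1 (Fin.zero_le _) ≤
        arObj n p.1.1 p.1.2 p.2 from ⟨Fin.zero_le _, p.2⟩)),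
      zero_after n hF' p.2, comp_zero])

lemma e_extApp (hF : IsSObj n F) (hF' : IsSObj n F')
    (μ : toAr n ⋙ F ⟶ toAr n ⋙ F') (p : ArCat n) :
    F.map (eHom n p) ≫ extApp n hF hF' μ p = μ.app p.1.2 ≫ F'.map (eHom n p) :=
  IsPushout.inl_desc _ _ _ _

/-- The extension as a natural transformation. -/
noncomputable def extNat (hF : IsSObj n F) (hF' : IsSObj n F')
    (μ : toAr n ⋙ F ⟶ toAr n ⋙ F') : F ⟶ F' where
  app p := extApp n hF hF' μ p
  naturality p q f := by
    show F.map f ≫ extApp n hF hF' μ q = extApp n hF hF' μ p ≫ F'.map f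
    haveI := epi_e n hF p
    rw [← cancel_epi (F.map (eHom n p))]
    conv_rhs => rw [← Category.assoc, e_extApp n hF hF' μ p, Category.assoc,
      pmap_comp F' (eHom n p) f (homOfLE (show (toAr n).obj p.1.2 ≤ q from
        ⟨Fin.zero_le _, (leOfHom f).2⟩))]
    rw [← Category.assoc,
      pmap_comp F (eHom n p) f (homOfLE (show (toAr n).obj p.1.2 ≤ q from
        ⟨Fin.zero_le _, (leOfHom f).2⟩)),
      ← pmap_comp F (homOfLE (show (toAr n).obj p.1.2 ≤ (toAr n).obj q.1.2 from
        ⟨le_rfl, (leOfHom f).2⟩)) (eHom n q),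
      Category.assoc, e_extApp n hF hF' μ q, ← Category.assoc,
      show F.map (homOfLE _) = (toAr n ⋙ F).map (homOfLE (leOfHom f).2) from pmap_eq F _ _,
      μ.naturality (homOfLE (leOfHom f).2), Category.assoc,
      show (toAr n ⋙ F').map (homOfLE (leOfHom f).2) = F'.map ((toAr n).map
        (homOfLE (leOfHom f).2)) from rfl,
      pmap_comp F' _ (eHom n q) (homOfLE (show (toAr n).obj p.1.2 ≤ q from
        ⟨Fin.zero_le _, (leOfHom f).2⟩))]

end Restriction

section Equiv

/-- The restriction functor from S-objects to monomorphism sequences. -/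
def restr : ObjectProperty.FullSubcategory (IsSObj n (A := A)) ⥤
    ObjectProperty.FullSubcategory (IsMonoSeq n (A := A)) where
  obj F := ⟨toAr n ⋙ F.obj, ⟨F.property.1 0, fun i j h => by
    have hm := F.property.2.1 0 i j (Fin.zero_le i) h
    show Mono (F.obj.map ((toAr n).map (homOfLE h)))
    rwa [show F.obj.map ((toAr n).map (homOfLE h)) = F.obj.map (homOfLE
      (show arObj n 0 i (Fin.zero_le i) ≤ arObj n 0 j ((Fin.zero_le i).trans h) from
        ⟨le_rfl, h⟩)) from pmap_eq F.obj _ _]⟩⟩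
  map η := ObjectProperty.homMk (Functor.whiskerLeft (toAr n) η.hom)

instance : (restr n (A := A)).Faithful where
  map_injective {F F'} {η θ} h := by
    apply ObjectProperty.hom_ext
    apply NatTrans.ext
    funext p
    haveI := epi_e n F.property p
    rw [← cancel_epi (F.obj.map (eHom n p)), η.hom.naturality (eHom n p),
      θ.hom.naturality (eHom n p)]
    congr 1
    exact NatTrans.congr_app (congrArg (fun f => f.hom) h) p.1.2

instance : (restr n (A := A)).Full where
  map_surjective {F F'} μ := by
    refine ⟨ObjectProperty.homMk (extNat n F.property F'.property μ.hom), ?_⟩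
    apply ObjectProperty.hom_ext
    apply NatTrans.ext
    funext j
    show extApp n F.property F'.property μ.hom ((toAr n).obj j) = μ.hom.app j
    have h := e_extApp n F.property F'.property μ.hom ((toAr n).obj j)
    erw [pmap_self F.obj (eHom n ((toAr n).obj j)), Category.id_comp] at h
    refine h.trans ?_
    erw [pmap_self F'.obj (eHom n ((toAr n).obj j))]
    exact Category.comp_id _

/-- The natural isomorphism `G ≅ toAr ⋙ cokF G`. -/
noncomputable def seqIso (G : Fin (n + 1) ⥤ A) (hG : IsMonoSeq n G) :
    G ≅ toAr n ⋙ cokF n G :=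
  NatIso.ofComponents (fun j =>
    { hom := cokernel.π (G.map (homOfLE (Fin.zero_le j)))
      inv := cokernel.desc _ (𝟙 _) (by erw [Category.comp_id]; exact hG.1.eq_of_src _ _)
      hom_inv_id := by erw [cokernel.π_desc]; rfl
      inv_hom_id := by
        apply coequalizer.hom_ext
        erw [cokernel.π_desc_assoc, Category.id_comp]
        exact (Category.comp_id _).symm })
    (fun {j j'} f => by
      show G.map f ≫ cokernel.π _ = cokernel.π _ ≫ cokernel.desc _ _ _
      erw [cokernel.π_desc, show G.map f = G.map (homOfLE (leOfHom ((toAr n).map f)).2)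
        from pmap_eq G _ _]
      rfl)

instance : (restr n (A := A)).EssSurj where
  mem_essImage G :=
    ⟨⟨cokF n G.obj, isSObj_cokF n G.obj G.property⟩,
      ⟨(ObjectProperty.fullyFaithfulι _).preimageIso (seqIso n G.obj G.property).symm⟩⟩

end Equiv


/-- In an abelian category, the category of functors `Ar[n] → A` satisfying the
Waldhausen conditions (vanishing on the diagonal, monomorphisms, pushout squares) is
equivalent to the category of sequences of monomorphisms `0 → A₁ → ⋯ → A_n`. -/
theorem sdot_equiv_monoSeq :
    Nonempty (ObjectProperty.FullSubcategory (IsSObj n (A := A)) ≌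
      ObjectProperty.FullSubcategory (IsMonoSeq n (A := A))) := by
  haveI : (restr n (A := A)).IsEquivalence := {}
  exact ⟨(restr n).asEquivalence⟩
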